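/- Let R = K[X,Y,U,V]/(XY − UV) where K is a field. Then the images x, y, u+v of X, Y, U+V in R form a regular sequence on R. -/

import Mathlib

open MvPolynomial

/-- `a_1, ..., a_r` is a regular sequence on `R`: each `a_i` is a non-zerodivisor on
`R/(a_1,...,a_{i-1})`, and `R/(a_1,...,a_r) ≠ 0`. -/
def IsRegularSeq (R : Type*) [CommRing R] (xs : List R) : Prop :=
  (∀ i : Fin xs.length,
    IsSMulRegular (R ⧸ Ideal.span {a | a ∈ xs.take (i : ℕ)}) (xs.get i)) ∧
  Nontrivial (R ⧸ Ideal.span {a | a ∈ xs})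

/-- `R = K[X,Y,U,V]/(XY - UV)`. -/
noncomputable abbrev hypersurfaceRing (K : Type) [Field K] : Type :=
  MvPolynomial (Fin 4) K ⧸
    Ideal.span {(X 0 : MvPolynomial (Fin 4) K) * X 1 - X 2 * X 3}

/-!
Write `S = K[X,Y,U,V]` and `p = XY - UV`. Each regularity statement lives in a quotient
`S / ((X_i)_{i ∈ s} + (p))`, and substituting `X_i ↦ 0` for `i ∈ s` turns membership in that
ideal into divisibility by the substituted `p`. For `s = ∅, {X}, {X, Y}` this is `p`, `-UV`,
`-UV`, and the elements `X`, `Y`, `U + V` are coprime to it in the factorial ring `S`, so they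
can be cancelled. The quotient by `(p, X, Y, U + V)` is nonzero because all generators vanish
at the origin.
-/

theorem isRegularSeq_triple {R : Type*} [CommRing R] {a b c : R}
    (ha : IsSMulRegular (R ⧸ (⊥ : Ideal R)) a) (hb : IsSMulRegular (R ⧸ Ideal.span {a}) b)
    (hc : IsSMulRegular (R ⧸ Ideal.span {a, b}) c)
    (habc : Nontrivial (R ⧸ Ideal.span {a, b, c})) :
    IsRegularSeq R [a, b, c] := by
  refine ⟨fun | ⟨0, _⟩ => ?_ | ⟨1, _⟩ => ?_ | ⟨2, _⟩ => ?_, ?_⟩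
  · convert ha <;> simp
  · convert hb <;> simp
  · convert hc <;> simp [Set.ext_iff]
  · convert habc; simp [Set.ext_iff]

theorem Ideal.isSMulRegular_quotient_map_mk_iff {S : Type*} [CommRing S] (J I : Ideal S)
    (a : S) :
    IsSMulRegular ((S ⧸ J) ⧸ I.map (Ideal.Quotient.mk J)) (Ideal.Quotient.mk J a) ↔
      ∀ f, a * f ∈ I ⊔ J → f ∈ I ⊔ J := by
  rw [isSMulRegular_quotient_iff_mem_of_smul_mem, Ideal.Quotient.mk_surjective.forall]
  simp [← map_mul]

namespace MvPolynomial

variable {σ R : Type*} [CommRing R]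

noncomputable def killVars (s : Set σ) : MvPolynomial σ R →ₐ[R] MvPolynomial σ R :=
  aeval (sᶜ.indicator X)

@[simp]
theorem killVars_X_of_mem {s : Set σ} {i : σ} (h : i ∈ s) :
    killVars s (X i : MvPolynomial σ R) = 0 := by
  simp [killVars, h]

@[simp]
theorem killVars_X_of_notMem {s : Set σ} {i : σ} (h : i ∉ s) :
    killVars s (X i : MvPolynomial σ R) = X i := by
  simp [killVars, h]

@[simp]
theorem killVars_empty : killVars (∅ : Set σ) = AlgHom.id R (MvPolynomial σ R) := by
  simp [killVars]

theorem span_X_image_le_ker_killVars (s : Set σ) :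
    Ideal.span (X '' s) ≤ RingHom.ker (killVars s : MvPolynomial σ R →ₐ[R] _) := by
  rw [Ideal.span_le]
  rintro _ ⟨i, hi, rfl⟩
  simp [hi]

theorem sub_killVars_mem_span_X_image (s : Set σ) (f : MvPolynomial σ R) :
    f - killVars s f ∈ Ideal.span (X '' s) := by
  induction f using MvPolynomial.induction_on with
  | C a => simp
  | add f g hf hg => simpa [add_sub_add_comm] using add_mem hf hg
  | mul_X f i hf =>
    have hX : X i - killVars s (X i : MvPolynomial σ R) ∈ Ideal.span (X '' s) := by
      by_cases hi : i ∈ s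
      · simpa [hi] using Ideal.subset_span (Set.mem_image_of_mem X hi)
      · simp [hi]
    have : f * X i - killVars s (f * X i)
        = (f - killVars s f) * X i + killVars s f * (X i - killVars s (X i)) := by
      rw [map_mul]; ring
    rw [this]
    exact add_mem (Ideal.mul_mem_right _ _ hf) (Ideal.mul_mem_left _ _ hX)

theorem mem_span_X_image_sup_span_singleton_iff {s : Set σ} {f g : MvPolynomial σ R} :
    f ∈ Ideal.span (X '' s) ⊔ Ideal.span {g} ↔ killVars s g ∣ killVars s f := by
  constructor
  · intro hf
    obtain ⟨a, ha, b, hb, rfl⟩ := Submodule.mem_sup.mp hf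
    obtain ⟨c, rfl⟩ := Ideal.mem_span_singleton'.mp hb
    have : killVars s a = 0 := span_X_image_le_ker_killVars s ha
    simp [this]
  · rintro ⟨c, hc⟩
    have hg : killVars s g - g ∈ Ideal.span (X '' s) := by
      simpa using neg_mem (sub_killVars_mem_span_X_image s g)
    have : f = (f - killVars s f) + c * (killVars s g - g) + c * g := by rw [hc]; ring
    rw [this]
    refine add_mem (Ideal.mem_sup_left ?_) (Ideal.mem_sup_right ?_)
    · exact add_mem (sub_killVars_mem_span_X_image s f) (Ideal.mul_mem_left _ _ hg)
    · exact Ideal.mul_mem_left _ _ (Ideal.mem_span_singleton_self g)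

theorem isSMulRegular_quotient_map_span_X_image [DecompositionMonoid (MvPolynomial σ R)]
    {s : Set σ} {p a : MvPolynomial σ R} (h : IsRelPrime (killVars s p) (killVars s a)) :
    IsSMulRegular ((MvPolynomial σ R ⧸ Ideal.span {p}) ⧸
      (Ideal.span (X '' s)).map (Ideal.Quotient.mk (Ideal.span {p})))
      (Ideal.Quotient.mk (Ideal.span {p}) a) := by
  rw [Ideal.isSMulRegular_quotient_map_mk_iff]
  intro f hf
  rw [mem_span_X_image_sup_span_singleton_iff, map_mul] at hf
  exact mem_span_X_image_sup_span_singleton_iff.2 (h.dvd_of_dvd_mul_left hf)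

theorem isRelPrime_X_mul_X [IsDomain R] [DecompositionMonoid (MvPolynomial σ R)] {i j : σ}
    {a : MvPolynomial σ R} (hi : ¬ X i ∣ a) (hj : ¬ X j ∣ a) : IsRelPrime (X i * X j) a :=
  (X_prime.irreducible.isRelPrime_iff_not_dvd.2 hi).mul_left
    (X_prime.irreducible.isRelPrime_iff_not_dvd.2 hj)

end MvPolynomial

/-- In `R = K[X,Y,U,V]/(XY - UV)`, the elements `x, y, u+v` form a regular sequence. -/
theorem regular_sequence_x_y_uv (K : Type) [Field K]
    (x y u v : hypersurfaceRing K)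
    (hx : x = Ideal.Quotient.mk _ (X 0)) (hy : y = Ideal.Quotient.mk _ (X 1))
    (hu : u = Ideal.Quotient.mk _ (X 2)) (hv : v = Ideal.Quotient.mk _ (X 3)) :
    IsRegularSeq (hypersurfaceRing K) [x, y, u + v] := by
  set mk := Ideal.Quotient.mk (Ideal.span {(X 0 : MvPolynomial (Fin 4) K) * X 1 - X 2 * X 3})
  subst hx hy hu hv
  have coprime_x : IsRelPrime (X 0 * X 1 - X 2 * X 3 : MvPolynomial (Fin 4) K) (X 0) := by
    refine (X_prime.irreducible.isRelPrime_iff_not_dvd.2 ?_).symm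
    rw [dvd_sub_right (dvd_mul_right _ _), X_prime.dvd_mul]
    simp
  have coprime_y : IsRelPrime (-(X 2 * X 3)) (X 1 : MvPolynomial (Fin 4) K) :=
    (isRelPrime_X_mul_X (by simp) (by simp)).neg_left
  have coprime_uv : IsRelPrime (-(X 2 * X 3)) (X 2 + X 3 : MvPolynomial (Fin 4) K) :=
    (isRelPrime_X_mul_X (by simp) (by simp)).neg_left
  apply isRegularSeq_triple
  · rw [show (⊥ : Ideal (hypersurfaceRing K)) = (Ideal.span (X '' ∅)).map mk by simp]
    exact isSMulRegular_quotient_map_span_X_image (by simpa using coprime_x)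
  · rw [show Ideal.span {mk (X 0)} = (Ideal.span (X '' {0})).map mk by simp [Ideal.map_span]]
    exact isSMulRegular_quotient_map_span_X_image (by simpa using coprime_y)
  · rw [show Ideal.span {mk (X 0), mk (X 1)} = (Ideal.span (X '' {0, 1})).map mk by
      simp [Ideal.map_span, Set.image_insert_eq], ← map_add]
    exact isSMulRegular_quotient_map_span_X_image (by simpa using coprime_uv)
  · let ε : hypersurfaceRing K →+* K := Ideal.Quotient.lift _ constantCoeff fun f hf => by
      obtain ⟨g, rfl⟩ := Ideal.mem_span_singleton'.1 hf
      simp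
    rw [Ideal.Quotient.nontrivial_iff]
    refine ne_top_of_le_ne_top (RingHom.ker_ne_top ε) ?_
    simp [Ideal.span_le, Set.insert_subset_iff, ε, mk]
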